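/- arXiv:1807.07503 — 2 statements merged into one kernel-verified Lean document; each statement's English description precedes it below -/
import Mathlib

section
/- (Concrete content of Theorem 3.2(2).) Let f be a Markov interval map and x ∈ Λ_f = Ω_f ∖ R_f(Γ) a regular point. Then the operators T_i on H_x = ℓ²(R_f(x)) are partial isometries with pairwise orthogonal nonzero range projections P_i = T_i T_i* that satisfy the Cuntz–Krieger relations: T_i* T_i = Σ_{j=1}^n a_{ij} T_j T_j* for every i, and Σ_{i=1}^n T_i T_i* = 1. -/
open scoped Classical ENNReal

noncomputable section

/-- Partition and branch data for a Markov interval map with `n` Markov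
subintervals.  `cm j` is the point `c_j⁻` and `cp j` is `c_j⁺` (with
`cm 0 = cp 0 = c₀` and `cm n = cp n = c_n`).  `f` is the globally defined map,
`F j` is the branch of `f` on the `j`-th Markov interval (indexed by
`j = 0, …, n-1`, corresponding to the interval `I_{j+1}` of the paper) and
`F' j` is the derivative of that branch. -/
structure MarkovSystem (n : ℕ) where
  cm : ℕ → ℝ
  cp : ℕ → ℝ
  f : ℝ → ℝ
  F : ℕ → ℝ → ℝ
  F' : ℕ → ℝ → ℝ
  two_le : 2 ≤ n
  cm_zero : cm 0 = cp 0
  cm_n : cm n = cp n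
  cm_le_cp : ∀ j ≤ n, cm j ≤ cp j
  cp_lt_cm : ∀ j < n, cp j < cm (j + 1)

namespace MarkovSystem

variable {n : ℕ} (M : MarkovSystem n)

/-- The Markov interval `I_{j+1} = [c_j⁺, c_{j+1}⁻]` (for `j < n`). -/
def Ipart (j : ℕ) : Set ℝ := Set.Icc (M.cp j) (M.cm (j + 1))

/-- The escape interval `E_j = (c_j⁻, c_j⁺)` (for `1 ≤ j ≤ n-1`). -/
def Epart (j : ℕ) : Set ℝ := Set.Ioo (M.cm j) (M.cp j)

/-- The ambient interval `I = [c₀, c_n]`. -/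
def itv : Set ℝ := Set.Icc (M.cm 0) (M.cm n)

/-- The domain of `f`, namely `⋃_{j=1}^n I_j`. -/
def dom : Set ℝ := ⋃ j ∈ Finset.range n, M.Ipart j

/-- The set `Γ` of partition boundary points. -/
def Gamma : Set ℝ := {y | ∃ j ≤ n, y = M.cm j ∨ y = M.cp j}

/-- `q`-fold image of a set under `f`, applying `f` only where it is defined. -/
def iterImage : ℕ → Set ℝ → Set ℝ
  | 0, S => S
  | q + 1, S => M.f '' (iterImage q S ∩ M.dom)

/-- `f^k(x)` is defined, i.e. all earlier iterates lie in the domain. -/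
def definedUpTo (k : ℕ) (x : ℝ) : Prop := ∀ l < k, M.f^[l] x ∈ M.dom

/-- The orbit equivalence relation `R_f`. -/
def Rrel (x y : ℝ) : Prop :=
  ∃ p q : ℕ, M.definedUpTo p x ∧ M.definedUpTo q y ∧ M.f^[p] x = M.f^[q] y

/-- The generalized orbit `R_f(x)` of a point `x ∈ I`. -/
def Rclass (x : ℝ) : Set ℝ := {y | y ∈ M.itv ∧ M.Rrel x y}

/-- The maximal invariant set `Ω_f`. -/
def Omega : Set ℝ := {x | x ∈ M.itv ∧ ∀ k, M.f^[k] x ∈ M.dom}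

/-- The escape set `E_f = I \ Ω_f`. -/
def Esc : Set ℝ := M.itv \ M.Omega

/-- The regular set `Λ_f = Ω_f \ R_f(Γ)`. -/
def Lambda : Set ℝ := {x | x ∈ M.Omega ∧ ∀ γ ∈ M.Gamma, ¬ M.Rrel x γ}

/-- The escape time of a point of the escape set. -/
def tau (x : ℝ) : ℕ := sInf {k | M.f^[k] x ∉ M.dom}

/-- The final escape point `e(x) = f^{τ(x)}(x)`. -/
def e (x : ℝ) : ℝ := M.f^[M.tau x] x

/-- The transition-matrix condition `a_{ij} = 1`, i.e. `f(int I_i) ⊇ int I_j`. -/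
def trans (i j : ℕ) : Prop := interior (M.Ipart j) ⊆ M.F i '' interior (M.Ipart i)

/-- The escape-transition condition `â_{ik} = 1`, i.e. `int I_i ∩ f⁻¹(E_k) ≠ ∅`. -/
def ahat (i k : ℕ) : Prop := (interior (M.Ipart i) ∩ M.F i ⁻¹' M.Epart k).Nonempty

end MarkovSystem

/-- The defining properties (P1)-(P4) of a Markov interval map, together with the
compatibility of the global map `f` with the branches `F j`:  `f` agrees with `F j`
on `I_j` except possibly at a boundary point shared with an adjacent interval,
where `f` is given by one of the two adjacent branches. -/
structure IsMarkov {n : ℕ} (M : MarkovSystem n) : Prop where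
  compat₁ : ∀ j < n, ∀ x ∈ M.Ipart j, (∀ k < n, k ≠ j → x ∉ M.Ipart k) → M.f x = M.F j x
  compat₂ : ∀ x ∈ M.dom, ∃ j, j < n ∧ x ∈ M.Ipart j ∧ M.f x = M.F j x
  maps_into : ∀ j < n, M.F j '' M.Ipart j ⊆ M.itv
  onto : M.itv ⊆ ⋃ j ∈ Finset.range n, M.F j '' M.Ipart j
  markov : ∀ i < n, ∃ S T : Set ℕ, S ⊆ {j | j < n} ∧ T ⊆ {j | 1 ≤ j ∧ j < n} ∧
    M.F i '' M.Ipart i = (⋃ j ∈ S, M.Ipart j) ∪ (⋃ j ∈ T, M.Epart j)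
  deriv : ∀ i < n, ∀ x ∈ M.Ipart i, HasDerivWithinAt (M.F i) (M.F' i x) (M.Ipart i) x
  derivCont : ∀ i < n, ContinuousOn (M.F' i) (M.Ipart i)
  mono : ∀ i < n, StrictMonoOn (M.F i) (M.Ipart i) ∨ StrictAntiOn (M.F i) (M.Ipart i)
  expansive : ∃ b > 1, ∀ i < n, ∀ x ∈ M.Ipart i, b < |M.F' i x|
  aperiodic : ∀ i < n, ∃ q, M.dom ⊆ M.iterImage q (M.Ipart i)

namespace MarkovSystem

variable {n : ℕ} (M : MarkovSystem n)

/-- The Hilbert space `H_x = ℓ²(R_f(x))`. -/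
abbrev Hsp (x : ℝ) : Type _ := lp (fun _ : M.Rclass x => ℂ) 2

/-- The canonical orthonormal basis vector `δ_z` of `H_x`, for `z ∈ R_f(x)`. -/
def dvec {x : ℝ} (z : M.Rclass x) : M.Hsp x := lp.single 2 z 1

/-- `T` is the bounded operator `T_i` on `H_x`, determined on the basis by
`T_i δ_y = δ_{(f|_{I_i})⁻¹(y)}` if `y ∈ f(I_i)` and `T_i δ_y = 0` otherwise. -/
def IsBranchOp (x : ℝ) (i : ℕ) (T : M.Hsp x →L[ℂ] M.Hsp x) : Prop :=
  (∀ z w : M.Rclass x, (w : ℝ) ∈ M.Ipart i → M.F i w = (z : ℝ) →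
      T (M.dvec z) = M.dvec w) ∧
  (∀ z : M.Rclass x, (z : ℝ) ∉ M.F i '' M.Ipart i → T (M.dvec z) = 0)

/-- `Pe` is the rank-one orthogonal projection onto `ℂ δ_{e(x)}`. -/
def IsEscProj (x : ℝ) (Pe : M.Hsp x →L[ℂ] M.Hsp x) : Prop :=
  ∀ z : M.Rclass x, Pe (M.dvec z) = if (z : ℝ) = M.e x then M.dvec z else 0

end MarkovSystem

/-!
Each `T_i` is composition with the branch `F_i`, restricted to the orbit class `R_f(x)`.
Since `x` is regular, `R_f(x)` misses `Γ`; hence it is invariant under the branches and their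
inverses, and each of its points lies in the interior of exactly one `I_j`. So `T_i T_i*` is the
diagonal projection onto `ℓ²(R_f(x) ∩ I_i)` and `T_i* T_i` the one onto `ℓ²(R_f(x) ∩ f(I_i))`.
For `z` in the interior of `I_j`, the Markov property turns `z ∈ f(I_i)` into `a_{ij} = 1`, and the
relations follow because the `I_j` partition `R_f(x)`. Property (P4) makes each `R_f(x) ∩ I_i`
nonempty, so no range projection vanishes.
-/

open Set
open scoped lp InnerProductSpace

namespace lp

variable {ι : Type*} [DecidableEq ι]

local notation "δ " i:max => lp.single (E := fun _ => ℂ) 2 i 1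

theorem ext_single_one {F : Type*} [AddCommMonoid F] [Module ℂ F] [TopologicalSpace F]
    [T2Space F] {A B : ℓ²(ι, ℂ) →L[ℂ] F} (h : ∀ i, A (δ i) = B (δ i)) :
    A = B :=
  lp.ext_continuousLinearMap ENNReal.ofNat_ne_top fun i => ContinuousLinearMap.ext_ring (h i)

theorem inner_single_one_single_one (i j : ι) :
    ⟪δ i, δ j⟫_ℂ = if i = j then 1 else 0 := by
  simp [lp.inner_single_left, Pi.single_apply]

theorem single_one_injective : Function.Injective fun i : ι => δ i := by
  intro i j h
  simpa [h] using (inner_single_one_single_one i j).symm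

theorem star_apply_apply (A : ℓ²(ι, ℂ) →L[ℂ] ℓ²(ι, ℂ)) (v : ℓ²(ι, ℂ)) (i : ι) :
    (star A v) i = ⟪A (δ i), v⟫_ℂ := by
  rw [ContinuousLinearMap.star_eq_adjoint, ← ContinuousLinearMap.adjoint_inner_right,
    lp.inner_single_left]
  simp

/-- `T` is composition with the partial map whose graph is `R`: on the basis of `ℓ²(ι)`,
`T δ_z = δ_w` if `R w z`, and `T δ_z = 0` if `z` has no `R`-preimage. -/
def IsCompOp (R : ι → ι → Prop) (T : ℓ²(ι, ℂ) →L[ℂ] ℓ²(ι, ℂ)) : Prop :=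
  (∀ w z, R w z → T (δ z) = δ w) ∧
  ∀ z, (∀ w, ¬ R w z) → T (δ z) = 0

namespace IsCompOp

variable {R : ι → ι → Prop} {T : ℓ²(ι, ℂ) →L[ℂ] ℓ²(ι, ℂ)}

theorem inner_apply_single (hT : IsCompOp R T) (w z : ι) :
    ⟪T (δ z), δ w⟫_ℂ = if R w z then 1 else 0 := by
  by_cases h : ∃ w', R w' z
  · obtain ⟨w', hw'⟩ := h
    have hiff : w' = w ↔ R w z :=
      ⟨fun h => h ▸ hw', fun h => single_one_injective ((hT.1 w' z hw').symm.trans (hT.1 w z h))⟩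
    simp only [hT.1 w' z hw', inner_single_one_single_one, hiff]
  · rw [hT.2 z (not_exists.1 h), inner_zero_left, if_neg fun hw => h ⟨w, hw⟩]

theorem star_apply_single (hT : IsCompOp R T) (hR : Relator.RightUnique R)
    {w z : ι} (h : R w z) : star T (δ w) = δ z := by
  ext ζ
  rw [star_apply_apply, hT.inner_apply_single, lp.single_apply, Pi.single_apply]
  exact if_congr ⟨fun hζ => hR hζ h, fun hζ => hζ ▸ h⟩ rfl rfl

theorem star_apply_single_of_forall_not (hT : IsCompOp R T) {w : ι} (h : ∀ z, ¬ R w z) :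
    star T (δ w) = 0 := by
  ext ζ
  rw [star_apply_apply, hT.inner_apply_single, if_neg (h ζ)]
  rfl

theorem mul_star_apply_single (hT : IsCompOp R T) (hR : Relator.RightUnique R)
    (w : ι) : (T * star T) (δ w) = if ∃ z, R w z then δ w else 0 := by
  split_ifs with h
  · obtain ⟨z, hz⟩ := h
    rw [mul_apply_eq_comp, hT.star_apply_single hR hz, hT.1 w z hz]
  · rw [mul_apply_eq_comp, hT.star_apply_single_of_forall_not (not_exists.1 h), map_zero]

theorem star_mul_apply_single (hT : IsCompOp R T) (hR : Relator.RightUnique R)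
    (z : ι) : (star T * T) (δ z) = if ∃ w, R w z then δ z else 0 := by
  split_ifs with h
  · obtain ⟨w, hw⟩ := h
    rw [mul_apply_eq_comp, hT.1 w z hw, hT.star_apply_single hR hw]
  · rw [mul_apply_eq_comp, hT.2 z (not_exists.1 h), map_zero]

theorem mul_star_mul (hT : IsCompOp R T) (hR : Relator.RightUnique R) :
    T * star T * T = T := by
  refine ext_single_one fun z => ?_
  by_cases h : ∃ w, R w z
  · obtain ⟨w, hw⟩ := h
    rw [mul_apply_eq_comp, hT.1 w z hw, hT.mul_star_apply_single hR, if_pos ⟨z, hw⟩]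
  · rw [mul_apply_eq_comp, hT.2 z (not_exists.1 h), map_zero]

end IsCompOp

end lp

namespace MarkovSystem

variable {n : ℕ} (M : MarkovSystem n) {j k : ℕ}

theorem cp_lt_cm_of_lt (hjk : j < k) (hk : k ≤ n) : M.cp j < M.cm k := by
  induction k, hjk using Nat.le_induction with
  | base => exact M.cp_lt_cm j hk
  | succ k hjk ih =>
    calc M.cp j < M.cm k := ih (by omega)
      _ ≤ M.cp k := M.cm_le_cp k (by omega)
      _ < M.cm (k + 1) := M.cp_lt_cm k hk

theorem cm_le_cm (hjk : j ≤ k) (hk : k ≤ n) : M.cm j ≤ M.cm k := by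
  rcases hjk.eq_or_lt with rfl | hjk
  · exact le_rfl
  · exact (M.cm_le_cp j (by omega)).trans (M.cp_lt_cm_of_lt hjk hk).le

theorem cp_le_cp (hjk : j ≤ k) (hk : k ≤ n) : M.cp j ≤ M.cp k := by
  rcases hjk.eq_or_lt with rfl | hjk
  · exact le_rfl
  · exact (M.cp_lt_cm_of_lt hjk hk).le.trans (M.cm_le_cp k hk)

theorem cp_le_cp_or_cm_le_cm (hj : j < n) (hk : k ≤ n) :
    M.cp k ≤ M.cp j ∨ M.cm (j + 1) ≤ M.cm k := by
  rcases le_or_gt k j with hkj | hjk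
  · exact Or.inl (M.cp_le_cp hkj hj.le)
  · exact Or.inr (M.cm_le_cm hjk hk)

variable {M} {y : ℝ}

theorem interior_Ipart : interior (M.Ipart j) = Ioo (M.cp j) (M.cm (j + 1)) :=
  interior_Icc

theorem Ipart_subset_itv (hj : j < n) : M.Ipart j ⊆ M.itv := fun _ hy =>
  ⟨M.cm_zero.trans_le ((M.cp_le_cp (Nat.zero_le j) hj.le).trans hy.1),
    hy.2.trans (M.cm_le_cm hj le_rfl)⟩

theorem Ipart_subset_dom (hj : j < n) : M.Ipart j ⊆ M.dom :=
  subset_biUnion_of_mem (u := M.Ipart) (Finset.mem_coe.2 (Finset.mem_range.2 hj))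

theorem notMem_Gamma_of_mem_Ioo (hj : j < n) (hy : y ∈ Ioo (M.cp j) (M.cm (j + 1))) :
    y ∉ M.Gamma := by
  rintro ⟨k, hk, rfl | rfl⟩ <;> rcases M.cp_le_cp_or_cm_le_cm hj hk with h | h
  all_goals linarith [hy.1, hy.2, M.cm_le_cp k hk]

theorem notMem_Epart_of_mem_Ioo (hj : j < n) (hy : y ∈ Ioo (M.cp j) (M.cm (j + 1)))
    (hk : k ≤ n) : y ∉ M.Epart k := by
  rintro ⟨h₁, h₂⟩
  rcases M.cp_le_cp_or_cm_le_cm hj hk with h | h <;> linarith [hy.1, hy.2]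

theorem notMem_Ipart_of_mem_Ioo (hj : j < n) (hy : y ∈ Ioo (M.cp j) (M.cm (j + 1)))
    (hk : k < n) (hkj : k ≠ j) : y ∉ M.Ipart k := by
  rintro ⟨h₁, h₂⟩
  rcases hkj.lt_or_gt with hkj | hjk
  · linarith [hy.1, M.cm_le_cm hkj hj.le, M.cm_le_cp j hj.le]
  · linarith [hy.2, M.cm_le_cm hjk hk.le, M.cm_le_cp k hk.le]

theorem mem_Ioo_of_mem_Ipart_of_notMem_Gamma (hj : j < n) (hy : y ∈ M.Ipart j)
    (hyΓ : y ∉ M.Gamma) : y ∈ Ioo (M.cp j) (M.cm (j + 1)) :=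
  ⟨hy.1.lt_of_ne fun h => hyΓ ⟨j, hj.le, Or.inr h.symm⟩,
    hy.2.lt_of_ne fun h => hyΓ ⟨j + 1, hj, Or.inl h⟩⟩

end MarkovSystem

namespace IsMarkov

open MarkovSystem

variable {n : ℕ} {M : MarkovSystem n} {i j : ℕ} {z : ℝ}

theorem f_eq_F_of_mem_Ioo (hM : IsMarkov M) (hi : i < n)
    (hz : z ∈ Ioo (M.cp i) (M.cm (i + 1))) : M.f z = M.F i z :=
  hM.compat₁ i hi z (Ioo_subset_Icc_self hz) fun _ hk hki => notMem_Ipart_of_mem_Ioo hi hz hk hki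

theorem mem_Gamma_of_isGreatest (hM : IsMarkov M) (hi : i < n)
    (hz : IsGreatest (M.F i '' M.Ipart i) z) : z ∈ M.Gamma := by
  obtain ⟨S, E, hS, -, himage⟩ := hM.markov i hi
  rw [himage] at hz
  obtain ⟨hzI | hzE, hmax⟩ := hz
  · obtain ⟨k, hk, hzk⟩ := mem_iUnion₂.1 hzI
    have : M.cm (k + 1) ≤ z :=
      hmax (Or.inl (mem_iUnion₂.2 ⟨k, hk, (M.cp_lt_cm k (hS hk)).le, le_rfl⟩))
    exact ⟨k + 1, hS hk, Or.inl (le_antisymm hzk.2 this)⟩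
  · obtain ⟨k, hk, hzk⟩ := mem_iUnion₂.1 hzE
    obtain ⟨y, hzy, hyk⟩ := exists_between hzk.2
    exact absurd (hmax (Or.inr (mem_iUnion₂.2 ⟨k, hk, hzk.1.trans hzy, hyk⟩))) hzy.not_ge

theorem mem_Gamma_of_isLeast (hM : IsMarkov M) (hi : i < n)
    (hz : IsLeast (M.F i '' M.Ipart i) z) : z ∈ M.Gamma := by
  obtain ⟨S, E, hS, -, himage⟩ := hM.markov i hi
  rw [himage] at hz
  obtain ⟨hzI | hzE, hmin⟩ := hz
  · obtain ⟨k, hk, hzk⟩ := mem_iUnion₂.1 hzI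
    have : z ≤ M.cp k :=
      hmin (Or.inl (mem_iUnion₂.2 ⟨k, hk, le_rfl, (M.cp_lt_cm k (hS hk)).le⟩))
    exact ⟨k, (hS hk).le, Or.inr (le_antisymm this hzk.1)⟩
  · obtain ⟨k, hk, hzk⟩ := mem_iUnion₂.1 hzE
    obtain ⟨y, hky, hyz⟩ := exists_between hzk.1
    exact absurd (hmin (Or.inr (mem_iUnion₂.2 ⟨k, hk, hky, hyz.trans hzk.2⟩))) hyz.not_ge

/-- Branches map the endpoints of their interval onto the extreme points of the image,
which the Markov property places in `Γ`. -/
theorem mem_Ioo_of_F_notMem_Gamma (hM : IsMarkov M) (hi : i < n) {w : ℝ}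
    (hw : w ∈ M.Ipart i) (hFw : M.F i w ∉ M.Gamma) : w ∈ Ioo (M.cp i) (M.cm (i + 1)) := by
  have hle : M.cp i ≤ M.cm (i + 1) := (M.cp_lt_cm i hi).le
  have hleft : M.F i (M.cp i) ∈ M.Gamma := by
    rcases hM.mono i hi with h | h
    · exact hM.mem_Gamma_of_isLeast hi (h.monotoneOn.map_isLeast (isLeast_Icc hle))
    · exact hM.mem_Gamma_of_isGreatest hi (h.antitoneOn.map_isLeast (isLeast_Icc hle))
  have hright : M.F i (M.cm (i + 1)) ∈ M.Gamma := by
    rcases hM.mono i hi with h | h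
    · exact hM.mem_Gamma_of_isGreatest hi (h.monotoneOn.map_isGreatest (isGreatest_Icc hle))
    · exact hM.mem_Gamma_of_isLeast hi (h.antitoneOn.map_isGreatest (isGreatest_Icc hle))
  exact ⟨hw.1.lt_of_ne fun h => hFw (h ▸ hleft), hw.2.lt_of_ne fun h => hFw (h ▸ hright)⟩

theorem Ipart_subset_image_of_mem_Ioo (hM : IsMarkov M) (hi : i < n) (hj : j < n)
    (hz : z ∈ Ioo (M.cp j) (M.cm (j + 1))) (hzi : z ∈ M.F i '' M.Ipart i) :
    M.Ipart j ⊆ M.F i '' M.Ipart i := by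
  obtain ⟨S, E, hS, hE, himage⟩ := hM.markov i hi
  rw [himage] at hzi ⊢
  rcases hzi with hzI | hzE
  · obtain ⟨k, hk, hzk⟩ := mem_iUnion₂.1 hzI
    obtain rfl : k = j := by_contra fun hkj => notMem_Ipart_of_mem_Ioo hj hz (hS hk) hkj hzk
    exact subset_union_left.trans' (subset_biUnion_of_mem hk)
  · obtain ⟨k, hk, hzk⟩ := mem_iUnion₂.1 hzE
    exact absurd hzk (notMem_Epart_of_mem_Ioo hj hz (hE hk).2.le)

theorem trans_iff_mem_image (hM : IsMarkov M) (hi : i < n) (hj : j < n)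
    (hz : z ∈ Ioo (M.cp j) (M.cm (j + 1))) : M.trans i j ↔ z ∈ M.F i '' M.Ipart i := by
  rw [MarkovSystem.trans, interior_Ipart, interior_Ipart]
  refine ⟨fun h => image_mono Ioo_subset_Icc_self (h hz), fun hzi y hy => ?_⟩
  obtain ⟨w, hw, rfl⟩ := hM.Ipart_subset_image_of_mem_Ioo hi hj hz hzi (Ioo_subset_Icc_self hy)
  exact ⟨w, hM.mem_Ioo_of_F_notMem_Gamma hi hw (notMem_Gamma_of_mem_Ioo hj hy), rfl⟩

end IsMarkov

namespace MarkovSystem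

variable {n : ℕ} {M : MarkovSystem n} {x z : ℝ}

theorem definedUpTo_zero : M.definedUpTo 0 z := fun _ h => absurd h (Nat.not_lt_zero _)

theorem definedUpTo_succ {q : ℕ} :
    M.definedUpTo (q + 1) z ↔ z ∈ M.dom ∧ M.definedUpTo q (M.f z) := by
  simp only [definedUpTo, Nat.forall_lt_succ_left, Function.iterate_zero_apply,
    Function.iterate_succ_apply]

theorem definedUpTo_succ' {q : ℕ} :
    M.definedUpTo (q + 1) z ↔ M.definedUpTo q z ∧ M.f^[q] z ∈ M.dom :=
  Nat.forall_lt_succ_right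

theorem rrel_f_iff (hz : z ∈ M.dom) : M.Rrel x (M.f z) ↔ M.Rrel x z := by
  constructor
  · rintro ⟨p, q, hp, hq, h⟩
    exact ⟨p, q + 1, hp, definedUpTo_succ.2 ⟨hz, hq⟩, by rwa [Function.iterate_succ_apply]⟩
  · rintro ⟨p, _ | q, hp, hq, h⟩
    · rw [Function.iterate_zero_apply] at h
      refine ⟨p + 1, 0, definedUpTo_succ'.2 ⟨hp, h ▸ hz⟩, definedUpTo_zero, ?_⟩
      rw [Function.iterate_succ_apply', h, Function.iterate_zero_apply]
    · exact ⟨p, q, hp, (definedUpTo_succ.1 hq).2, by rwa [← Function.iterate_succ_apply]⟩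

theorem exists_of_mem_iterImage {q : ℕ} {S : Set ℝ} {y : ℝ} (hy : y ∈ M.iterImage q S) :
    ∃ w ∈ S, M.definedUpTo q w ∧ M.f^[q] w = y := by
  induction q generalizing y with
  | zero => exact ⟨y, hy, definedUpTo_zero, rfl⟩
  | succ q ih =>
    obtain ⟨u, ⟨hu, hudom⟩, rfl⟩ := hy
    obtain ⟨w, hwS, hw, rfl⟩ := ih hu
    exact ⟨w, hwS, definedUpTo_succ'.2 ⟨hw, hudom⟩, Function.iterate_succ_apply' _ _ _⟩

variable {i : ℕ}

theorem dvec_ne_zero (z : M.Rclass x) : M.dvec z ≠ 0 :=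
  norm_ne_zero_iff.1 (by simp [dvec, lp.norm_single])

theorem ext_dvec {A B : M.Hsp x →L[ℂ] M.Hsp x} (h : ∀ z, A (M.dvec z) = B (M.dvec z)) :
    A = B :=
  lp.ext_single_one h

theorem notMem_Gamma_of_mem_Rclass (hx : x ∈ M.Lambda) (hz : z ∈ M.Rclass x) :
    z ∉ M.Gamma :=
  fun hzΓ => hx.2 z hzΓ hz.2

theorem mem_dom_of_mem_Rclass (hx : x ∈ M.Lambda) (hz : z ∈ M.Rclass x) : z ∈ M.dom := by
  obtain ⟨p, _ | q, -, hq, h⟩ := hz.2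
  · rw [Function.iterate_zero_apply] at h
    exact h ▸ hx.1.2 p
  · exact hq 0 q.succ_pos

theorem exists_mem_Ioo_of_mem_Rclass (hx : x ∈ M.Lambda) (hz : z ∈ M.Rclass x) :
    ∃ j < n, z ∈ Ioo (M.cp j) (M.cm (j + 1)) := by
  obtain ⟨j, hj, hzj⟩ := mem_iUnion₂.1 (mem_dom_of_mem_Rclass hx hz)
  have hj : j < n := Finset.mem_range.1 hj
  exact ⟨j, hj, mem_Ioo_of_mem_Ipart_of_notMem_Gamma hj hzj (notMem_Gamma_of_mem_Rclass hx hz)⟩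

def branchRel (x : ℝ) (i : ℕ) (w z : M.Rclass x) : Prop :=
  (w : ℝ) ∈ M.Ipart i ∧ M.F i w = z

theorem branchRel_rightUnique : Relator.RightUnique (M.branchRel x i) :=
  fun _ _ _ h h' => Subtype.ext (h.2.symm.trans h'.2)

end MarkovSystem

namespace IsMarkov

open MarkovSystem Finset

variable {n : ℕ} {M : MarkovSystem n} {x z : ℝ} {i j : ℕ} {T : M.Hsp x →L[ℂ] M.Hsp x}

theorem F_mem_Rclass (hM : IsMarkov M) (hx : x ∈ M.Lambda) (hi : i < n)
    (hz : z ∈ M.Rclass x) (hzi : z ∈ M.Ipart i) : M.F i z ∈ M.Rclass x := by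
  have hIoo := mem_Ioo_of_mem_Ipart_of_notMem_Gamma hi hzi (notMem_Gamma_of_mem_Rclass hx hz)
  refine ⟨hM.maps_into i hi (mem_image_of_mem _ hzi), ?_⟩
  rw [← hM.f_eq_F_of_mem_Ioo hi hIoo, rrel_f_iff (Ipart_subset_dom hi hzi)]
  exact hz.2

theorem mem_Rclass_of_F_mem_Rclass (hM : IsMarkov M) (hx : x ∈ M.Lambda) (hi : i < n)
    {w : ℝ} (hw : w ∈ M.Ipart i) (hFw : M.F i w ∈ M.Rclass x) : w ∈ M.Rclass x := by
  have hIoo := hM.mem_Ioo_of_F_notMem_Gamma hi hw (notMem_Gamma_of_mem_Rclass hx hFw)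
  refine ⟨Ipart_subset_itv hi hw, ?_⟩
  rw [← rrel_f_iff (Ipart_subset_dom hi hw), hM.f_eq_F_of_mem_Ioo hi hIoo]
  exact hFw.2

theorem exists_mem_Rclass_Ipart (hM : IsMarkov M) (hx : x ∈ M.Lambda) (hi : i < n) :
    ∃ w ∈ M.Rclass x, w ∈ M.Ipart i := by
  obtain ⟨q, hq⟩ := hM.aperiodic i hi
  obtain ⟨w, hwi, hw, hwx⟩ := exists_of_mem_iterImage (hq (hx.1.2 0))
  exact ⟨w, ⟨Ipart_subset_itv hi hwi, 0, q, definedUpTo_zero, hw, hwx.symm⟩, hwi⟩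

theorem exists_branchRel_iff_mem_Ipart (hM : IsMarkov M) (hx : x ∈ M.Lambda) (hi : i < n)
    (w : M.Rclass x) : (∃ z, M.branchRel x i w z) ↔ (w : ℝ) ∈ M.Ipart i :=
  ⟨fun ⟨_, h⟩ => h.1, fun h => ⟨⟨_, hM.F_mem_Rclass hx hi w.2 h⟩, h, rfl⟩⟩

theorem exists_branchRel_iff_mem_image (hM : IsMarkov M) (hx : x ∈ M.Lambda) (hi : i < n)
    (z : M.Rclass x) : (∃ w, M.branchRel x i w z) ↔ (z : ℝ) ∈ M.F i '' M.Ipart i :=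
  ⟨fun ⟨w, hw⟩ => ⟨w, hw⟩,
    fun ⟨w, hw, hwz⟩ => ⟨⟨w, hM.mem_Rclass_of_F_mem_Rclass hx hi hw (hwz ▸ z.2)⟩, hw, hwz⟩⟩

theorem isCompOp_branchRel (hM : IsMarkov M) (hx : x ∈ M.Lambda) (hi : i < n)
    (hT : M.IsBranchOp x i T) : lp.IsCompOp (M.branchRel x i) T :=
  ⟨fun w z h => hT.1 z w h.1 h.2, fun z hz => hT.2 z fun hzi =>
    let ⟨w, hw⟩ := (hM.exists_branchRel_iff_mem_image hx hi z).2 hzi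
    hz w hw⟩

theorem mul_star_apply_dvec (hM : IsMarkov M) (hx : x ∈ M.Lambda) (hi : i < n)
    (hT : M.IsBranchOp x i T) (z : M.Rclass x) :
    (T * star T) (M.dvec z) = if (z : ℝ) ∈ M.Ipart i then M.dvec z else 0 := by
  simp only [← hM.exists_branchRel_iff_mem_Ipart hx hi]
  exact (hM.isCompOp_branchRel hx hi hT).mul_star_apply_single branchRel_rightUnique z

theorem star_mul_apply_dvec (hM : IsMarkov M) (hx : x ∈ M.Lambda) (hi : i < n)
    (hT : M.IsBranchOp x i T) (z : M.Rclass x) :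
    (star T * T) (M.dvec z) = if (z : ℝ) ∈ M.F i '' M.Ipart i then M.dvec z else 0 := by
  simp only [← hM.exists_branchRel_iff_mem_image hx hi]
  exact (hM.isCompOp_branchRel hx hi hT).star_mul_apply_single branchRel_rightUnique z

theorem mul_star_apply_dvec_of_mem_Ioo (hM : IsMarkov M) (hx : x ∈ M.Lambda) (hi : i < n)
    (hT : M.IsBranchOp x i T) (hj : j < n) {z : M.Rclass x}
    (hz : (z : ℝ) ∈ Ioo (M.cp j) (M.cm (j + 1))) :
    (T * star T) (M.dvec z) = if i = j then M.dvec z else 0 := by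
  rw [hM.mul_star_apply_dvec hx hi hT]
  rcases eq_or_ne i j with rfl | hij
  · rw [if_pos (show (z : ℝ) ∈ M.Ipart i from Ioo_subset_Icc_self hz), if_pos rfl]
  · rw [if_neg (notMem_Ipart_of_mem_Ioo hj hz hi hij), if_neg hij]

theorem mul_star_ne_zero (hM : IsMarkov M) (hx : x ∈ M.Lambda) (hi : i < n)
    (hT : M.IsBranchOp x i T) : T * star T ≠ 0 := by
  obtain ⟨w, hw, hwi⟩ := hM.exists_mem_Rclass_Ipart hx hi
  intro h
  have hPw := hM.mul_star_apply_dvec hx hi hT ⟨w, hw⟩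
  rw [h, if_pos hwi, zero_apply] at hPw
  exact dvec_ne_zero _ hPw.symm

theorem mul_star_mul_mul_star_eq_zero (hM : IsMarkov M) (hx : x ∈ M.Lambda) (hi : i < n)
    (hj : j < n) (hij : i ≠ j) {S : M.Hsp x →L[ℂ] M.Hsp x} (hT : M.IsBranchOp x i T)
    (hS : M.IsBranchOp x j S) : T * star T * (S * star S) = 0 := by
  refine ext_dvec fun z => ?_
  obtain ⟨k, hk, hz⟩ := exists_mem_Ioo_of_mem_Rclass hx z.2
  rw [mul_apply_eq_comp, hM.mul_star_apply_dvec_of_mem_Ioo hx hj hS hk hz, zero_apply]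
  split_ifs with hjk
  · rw [hM.mul_star_apply_dvec_of_mem_Ioo hx hi hT hk hz, if_neg (hjk ▸ hij)]
  · exact map_zero _

theorem star_mul_self_eq_sum (hM : IsMarkov M) (hx : x ∈ M.Lambda)
    {T : ℕ → (M.Hsp x →L[ℂ] M.Hsp x)}
    (hT : ∀ i < n, M.IsBranchOp x i (T i)) (hi : i < n) :
    star (T i) * T i = ∑ j ∈ range n, if M.trans i j then T j * star (T j) else 0 := by
  refine ext_dvec fun z => ?_
  obtain ⟨k, hk, hz⟩ := exists_mem_Ioo_of_mem_Rclass hx z.2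
  have hPz : ∀ j ∈ range n, (T j * star (T j)) (M.dvec z) = if j = k then M.dvec z else 0 :=
    fun j hj => hM.mul_star_apply_dvec_of_mem_Ioo hx (mem_range.1 hj) (hT j (mem_range.1 hj)) hk hz
  rw [hM.star_mul_apply_dvec hx hi (hT i hi), ← hM.trans_iff_mem_image hi hk hz, _root_.sum_apply,
    sum_eq_single_of_mem k (mem_range.2 hk) fun j hj hjk => ?_]
  · split_ifs
    · rw [hPz k (mem_range.2 hk), if_pos rfl]
    · rfl
  · split_ifs
    · rw [hPz j hj, if_neg hjk]
    · rfl

theorem sum_mul_star_eq_one (hM : IsMarkov M) (hx : x ∈ M.Lambda)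
    {T : ℕ → (M.Hsp x →L[ℂ] M.Hsp x)}
    (hT : ∀ i < n, M.IsBranchOp x i (T i)) : ∑ i ∈ range n, T i * star (T i) = 1 := by
  refine ext_dvec fun z => ?_
  obtain ⟨k, hk, hz⟩ := exists_mem_Ioo_of_mem_Rclass hx z.2
  rw [_root_.sum_apply, sum_congr rfl fun i hi => hM.mul_star_apply_dvec_of_mem_Ioo hx
      (mem_range.1 hi) (hT i (mem_range.1 hi)) hk hz, sum_ite_eq', if_pos (mem_range.2 hk),
    one_apply_eq_self]

end IsMarkov

/-- Concrete content of Theorem 3.2(2): for a regular point `x ∈ Λ_f`, the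
operators `T_i` are partial isometries with nonzero pairwise orthogonal range
projections satisfying the Cuntz–Krieger relations
`T_i* T_i = ∑_j a_{ij} T_j T_j*` and `∑_i T_i T_i* = 1`. -/
theorem cuntz_krieger_relations_regular {n : ℕ} (M : MarkovSystem n) (hM : IsMarkov M)
    {x : ℝ} (hx : x ∈ M.Lambda)
    (T : ℕ → (M.Hsp x →L[ℂ] M.Hsp x)) (hT : ∀ i < n, M.IsBranchOp x i (T i)) :
    (∀ i < n, T i * star (T i) * T i = T i ∧
      T i * star (T i) ≠ 0 ∧
      IsSelfAdjoint (T i * star (T i)) ∧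
      (T i * star (T i)) * (T i * star (T i)) = T i * star (T i)) ∧
    (∀ i < n, ∀ j < n, i ≠ j → (T i * star (T i)) * (T j * star (T j)) = 0) ∧
    (∀ i < n, star (T i) * T i =
      ∑ j ∈ Finset.range n, if M.trans i j then T j * star (T j) else 0) ∧
    (∑ i ∈ Finset.range n, T i * star (T i)) = 1 := by
  have hpartialIso : ∀ i < n, T i * star (T i) * T i = T i := fun i hi =>
    (hM.isCompOp_branchRel hx hi (hT i hi)).mul_star_mul MarkovSystem.branchRel_rightUnique
  refine ⟨fun i hi => ⟨hpartialIso i hi, hM.mul_star_ne_zero hx hi (hT i hi),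
      .mul_star_self _, by rw [← mul_assoc, hpartialIso i hi]⟩,
    fun i hi j hj hij => hM.mul_star_mul_mul_star_eq_zero hx hi hj hij (hT i hi) (hT j hj),
    fun i hi => hM.star_mul_self_eq_sum hx hT hi, hM.sum_mul_star_eq_one hx hT⟩
end
end

section
/- (Non-equivalence of escape and regular representations.) Let f be a Markov interval map, x ∈ E_f, and y ∈ Λ_f = Ω_f ∖ R_f(Γ). Then there is no unitary U : H_x → H_y with U T_i^{(x)} U* = T_i^{(y)} for all i ∈ {1,…,n}. -/
open scoped Classical ENNReal

noncomputable section

namespace MarkovSystem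

variable {n : ℕ} (M : MarkovSystem n)

lemma cmMono : ∀ k, k ≤ n → ∀ j, j ≤ k → M.cm j ≤ M.cm k := by
  intro k
  induction k with
  | zero =>
    intro _ j hj
    have : j = 0 := Nat.le_zero.mp hj
    subst this; exact le_rfl
  | succ k ih =>
    intro hk j hj
    rcases eq_or_lt_of_le hj with rfl | h
    · exact le_rfl
    · refine le_trans (ih (by omega) j (by omega)) ?_
      exact le_of_lt (lt_of_le_of_lt (M.cm_le_cp k (by omega)) (M.cp_lt_cm k (by omega)))

lemma cpMono : ∀ k, k ≤ n → ∀ j, j ≤ k → M.cp j ≤ M.cp k := by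
  intro k
  induction k with
  | zero =>
    intro _ j hj
    have : j = 0 := Nat.le_zero.mp hj
    subst this; exact le_rfl
  | succ k ih =>
    intro hk j hj
    rcases eq_or_lt_of_le hj with rfl | h
    · exact le_rfl
    · refine le_trans (ih (by omega) j (by omega)) ?_
      exact le_of_lt (lt_of_lt_of_le (M.cp_lt_cm k (by omega)) (M.cm_le_cp (k+1) (by omega)))

lemma IpartSubItv {i : ℕ} (hi : i < n) : M.Ipart i ⊆ M.itv := by
  intro w hw
  obtain ⟨h1, h2⟩ := hw
  constructor
  · exact le_trans (le_trans (M.cmMono i (by omega) 0 (by omega)) (M.cm_le_cp i (by omega))) h1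
  · exact le_trans h2 (M.cmMono n le_rfl (i+1) (by omega))

lemma memDom {i : ℕ} (hi : i < n) {w : ℝ} (hw : w ∈ M.Ipart i) : w ∈ M.dom := by
  simp only [MarkovSystem.dom, Set.mem_iUnion]
  exact ⟨i, Finset.mem_range.mpr hi, hw⟩

lemma gammaEndpoint {γ : ℝ} (hγ : γ ∈ M.Gamma) {j : ℕ} (hj : j < n)
    (hm : γ ∈ M.Ipart j) : γ = M.cp j ∨ γ = M.cm (j+1) := by
  obtain ⟨k, hk, hcase⟩ := hγ
  obtain ⟨h1, h2⟩ := hm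
  rcases hcase with rfl | rfl
  · rcases Nat.lt_or_ge k (j+1) with h | h
    · left
      have : M.cm k ≤ M.cp j :=
        le_trans (M.cmMono j (by omega) k (by omega)) (M.cm_le_cp j (by omega))
      exact le_antisymm this h1
    · right
      exact le_antisymm h2 (M.cmMono k hk (j+1) h)
  · rcases Nat.lt_or_ge k (j+1) with h | h
    · left
      exact le_antisymm (M.cpMono j (by omega) k (by omega)) h1
    · right
      exact le_antisymm h2 (le_trans (M.cmMono k hk (j+1) h) (M.cm_le_cp k hk))

lemma interGamma {i k : ℕ} (hi : i < n) (hk : k < n) {w : ℝ} (hik : i ≠ k)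
    (hwi : w ∈ M.Ipart i) (hwk : w ∈ M.Ipart k) : w ∈ M.Gamma := by
  rcases Nat.lt_or_ge i k with h | h
  · have h2 : M.cm (i+1) ≤ M.cp k :=
      le_trans (M.cmMono k (by omega) (i+1) (by omega)) (M.cm_le_cp k (by omega))
    exact ⟨k, by omega, Or.inr (le_antisymm (le_trans hwi.2 h2) hwk.1)⟩
  · have hki : k < i := by omega
    have h2 : M.cm (k+1) ≤ M.cp i :=
      le_trans (M.cmMono i (by omega) (k+1) (by omega)) (M.cm_le_cp i (by omega))
    exact ⟨i, by omega, Or.inr (le_antisymm (le_trans hwk.2 h2) hwi.1)⟩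

lemma endpointImage (hM : IsMarkov M) {i : ℕ} (hi : i < n) {γ : ℝ}
    (hγ : γ = M.cp i ∨ γ = M.cm (i+1)) : M.F i γ ∈ M.Gamma := by
  have hγI : γ ∈ M.Ipart i := by
    rcases hγ with rfl | rfl
    · exact ⟨le_rfl, (M.cp_lt_cm i hi).le⟩
    · exact ⟨(M.cp_lt_cm i hi).le, le_rfl⟩
  have hmem : M.F i γ ∈ M.F i '' M.Ipart i := ⟨γ, hγI, rfl⟩
  have hbound : (∀ t ∈ M.F i '' M.Ipart i, M.F i γ ≤ t) ∨
      (∀ t ∈ M.F i '' M.Ipart i, t ≤ M.F i γ) := by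
    rcases hM.mono i hi with hmono | hanti
    · rcases hγ with rfl | rfl
      · left; rintro t ⟨s, hs, rfl⟩
        exact hmono.monotoneOn hγI hs hs.1
      · right; rintro t ⟨s, hs, rfl⟩
        exact hmono.monotoneOn hs hγI hs.2
    · rcases hγ with rfl | rfl
      · right; rintro t ⟨s, hs, rfl⟩
        exact hanti.antitoneOn hγI hs hs.1
      · left; rintro t ⟨s, hs, rfl⟩
        exact hanti.antitoneOn hs hγI hs.2
  obtain ⟨S, T, hS, hT, himg⟩ := hM.markov i hi
  have hmem' := hmem
  rw [himg] at hmem'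
  rcases hmem' with hmemI | hmemE
  · obtain ⟨j, hjS, hmj⟩ := Set.mem_iUnion₂.mp hmemI
    have hjn : j < n := hS hjS
    rcases hbound with hlb | hub
    · have hcpj : M.cp j ∈ M.F i '' M.Ipart i := by
        rw [himg]
        exact Or.inl (Set.mem_iUnion₂.mpr ⟨j, hjS, ⟨le_rfl, (M.cp_lt_cm j hjn).le⟩⟩)
      exact ⟨j, by omega, Or.inr (le_antisymm (hlb _ hcpj) hmj.1)⟩
    · have hcmj : M.cm (j+1) ∈ M.F i '' M.Ipart i := by
        rw [himg]
        exact Or.inl (Set.mem_iUnion₂.mpr ⟨j, hjS, ⟨(M.cp_lt_cm j hjn).le, le_rfl⟩⟩)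
      exact ⟨j+1, by omega, Or.inl (le_antisymm hmj.2 (hub _ hcmj))⟩
  · obtain ⟨j, hjT, hmj⟩ := Set.mem_iUnion₂.mp hmemE
    exfalso
    obtain ⟨hm1, hm2⟩ := hmj
    rcases hbound with hlb | hub
    · have ht : (M.cm j + M.F i γ)/2 ∈ M.Epart j :=
        ⟨by simp only [MarkovSystem.Epart] at *; linarith,
         by simp only [MarkovSystem.Epart] at *; linarith⟩
      have htmem : (M.cm j + M.F i γ)/2 ∈ M.F i '' M.Ipart i := by
        rw [himg]; exact Or.inr (Set.mem_iUnion₂.mpr ⟨j, hjT, ht⟩)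
      have := hlb _ htmem
      linarith
    · have ht : (M.F i γ + M.cp j)/2 ∈ M.Epart j :=
        ⟨by simp only [MarkovSystem.Epart] at *; linarith,
         by simp only [MarkovSystem.Epart] at *; linarith⟩
      have htmem : (M.F i γ + M.cp j)/2 ∈ M.F i '' M.Ipart i := by
        rw [himg]; exact Or.inr (Set.mem_iUnion₂.mpr ⟨j, hjT, ht⟩)
      have := hub _ htmem
      linarith

lemma gammaDom : M.Gamma ⊆ M.dom := by
  rintro γ ⟨j, hj, hγ⟩
  have h2 : 2 ≤ n := M.two_le
  rcases hγ with rfl | rfl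
  · rcases Nat.eq_zero_or_pos j with rfl | hj0
    · refine M.memDom (i := 0) (by omega) ⟨le_of_eq M.cm_zero.symm, ?_⟩
      exact le_of_lt (lt_of_le_of_lt (M.cm_le_cp 0 (by omega)) (M.cp_lt_cm 0 (by omega)))
    · obtain ⟨s, rfl⟩ : ∃ s, j = s + 1 := ⟨j - 1, by omega⟩
      exact M.memDom (i := s) (by omega) ⟨(M.cp_lt_cm s (by omega)).le, le_rfl⟩
  · rcases Nat.lt_or_ge j n with h | h
    · exact M.memDom (i := j) h ⟨le_rfl, (M.cp_lt_cm j h).le⟩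
    · have hjn : j = n := by omega
      have hcp : M.cp j = M.cm n := by rw [hjn, ← M.cm_n]
      rw [hcp]
      obtain ⟨s, hs⟩ : ∃ s, n = s + 1 := ⟨n - 1, by omega⟩
      refine M.memDom (i := s) (by omega) ?_
      constructor
      · exact le_of_le_of_eq (M.cp_lt_cm s (by omega)).le (congrArg M.cm hs.symm)
      · exact le_of_eq (congrArg M.cm hs)

lemma fMemItv (hM : IsMarkov M) {w : ℝ} (hw : w ∈ M.dom) : M.f w ∈ M.itv := by
  obtain ⟨j, hj, hmem, heq⟩ := hM.compat₂ w hw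
  rw [heq]
  exact hM.maps_into j hj ⟨w, hmem, rfl⟩

lemma gammaStep (hM : IsMarkov M) {γ : ℝ} (hγ : γ ∈ M.Gamma) : M.f γ ∈ M.Gamma := by
  obtain ⟨j, hj, hmem, heq⟩ := hM.compat₂ γ (M.gammaDom hγ)
  rw [heq]
  exact M.endpointImage hM hj (M.gammaEndpoint hγ hj hmem)

lemma gammaIter (hM : IsMarkov M) {γ : ℝ} (hγ : γ ∈ M.Gamma) (k : ℕ) :
    M.f^[k] γ ∈ M.Gamma := by
  induction k with
  | zero => simpa using hγ
  | succ k ih =>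
    rw [Function.iterate_succ_apply']
    exact M.gammaStep hM ih

end MarkovSystem

local notation "⟪" x ", " y "⟫" => @inner ℂ _ _ x y

/-- Non-equivalence of escape and regular representations: for `x ∈ E_f` and
`y ∈ Λ_f`, no unitary `U : H_x → H_y` satisfies `U T_i^{(x)} U* = T_i^{(y)}`
for all `i`. -/
theorem escape_not_equivalent_to_regular {n : ℕ} (M : MarkovSystem n) (hM : IsMarkov M)
    {x y : ℝ} (hx : x ∈ M.Esc) (hy : y ∈ M.Lambda)
    (Tx : ℕ → (M.Hsp x →L[ℂ] M.Hsp x)) (hTx : ∀ i < n, M.IsBranchOp x i (Tx i))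
    (Ty : ℕ → (M.Hsp y →L[ℂ] M.Hsp y)) (hTy : ∀ i < n, M.IsBranchOp y i (Ty i)) :
    ¬ ∃ U : M.Hsp x ≃ₗᵢ[ℂ] M.Hsp y,
      ∀ i < n, ∀ ξ : M.Hsp x, U (Tx i ξ) = Ty i (U ξ) := by
  classical
  rintro ⟨U, hU⟩
  obtain ⟨hxI, hxO⟩ := hx
  have hne : {k | M.f^[k] x ∉ M.dom}.Nonempty := by
    by_contra h
    rw [Set.not_nonempty_iff_eq_empty] at h
    refine hxO ⟨hxI, fun k => ?_⟩
    by_contra hk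
    have hmem : k ∈ {k | M.f^[k] x ∉ M.dom} := hk
    rw [h] at hmem
    exact hmem
  have htau_not : M.f^[M.tau x] x ∉ M.dom := Nat.sInf_mem hne
  have hmin : ∀ k, k < M.tau x → M.f^[k] x ∈ M.dom := by
    intro k hk
    by_contra hk'
    exact Nat.notMem_of_lt_sInf hk hk'
  have hescape : ∀ z : ℝ, M.Rrel x z → ∃ m, M.f^[m] z ∉ M.dom := by
    rintro z ⟨p, q, hp, hq, heq⟩
    have hpτ : p ≤ M.tau x := by
      by_contra h
      push_neg at h
      exact htau_not (hp (M.tau x) h)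
    refine ⟨(M.tau x - p) + q, ?_⟩
    have heq2 : M.f^[(M.tau x - p) + q] z = M.f^[M.tau x] x := by
      rw [Function.iterate_add_apply, ← heq, ← Function.iterate_add_apply]
      congr 1
      omega
    rw [heq2]
    exact htau_not
  have hxGamma : ∀ z : ℝ, z ∈ M.Rclass x → z ∉ M.Gamma := by
    intro z hz hγ
    obtain ⟨m, hm⟩ := hescape z hz.2
    exact hm (M.gammaDom (M.gammaIter hM hγ m))
  have hexdom : M.e x ∉ M.dom := htau_not
  have hexitv : M.e x ∈ M.itv := by
    rcases Nat.eq_zero_or_pos (M.tau x) with h | h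
    · show M.f^[M.tau x] x ∈ M.itv
      rw [h]
      simpa using hxI
    · obtain ⟨s, hs⟩ : ∃ s, M.tau x = s + 1 := ⟨M.tau x - 1, by omega⟩
      show M.f^[M.tau x] x ∈ M.itv
      rw [hs, Function.iterate_succ_apply']
      exact M.fMemItv hM (hmin s (by omega))
  have hexR : M.e x ∈ M.Rclass x := by
    refine ⟨hexitv, M.tau x, 0, fun l hl => hmin l hl, fun l hl => (Nat.not_lt_zero l hl).elim, ?_⟩
    rfl
  have hback : ∀ i, i < n → ∀ z : ℝ, z ∈ M.Rclass x → ∀ w : ℝ, w ∈ M.Ipart i →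
      M.F i w = z → w ∈ M.Rclass x := by
    intro i hi z hz w hw hFw
    have huniq : ∀ k < n, k ≠ i → w ∉ M.Ipart k := by
      intro k hk hki hwk
      exact hxGamma z hz (hFw ▸ M.endpointImage hM hi
        (M.gammaEndpoint (M.interGamma hi hk (Ne.symm hki) hw hwk) hi hw))
    have hfw : M.f w = M.F i w := hM.compat₁ i hi w hw huniq
    obtain ⟨p, q, hp, hq, heq⟩ := hz.2
    refine ⟨M.IpartSubItv hi hw, p, q+1, hp, ?_, ?_⟩
    · intro l hl
      cases l with
      | zero => simpa using M.memDom hi hw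
      | succ s =>
        rw [Function.iterate_succ_apply, hfw, hFw]
        exact hq s (by omega)
    · rw [Function.iterate_succ_apply, hfw, hFw]
      exact heq
  have hxorth : ∀ i, i < n → ∀ ψ : M.Hsp x, ⟪M.dvec ⟨M.e x, hexR⟩, (Tx i) ψ⟫ = 0 := by
    intro i hi
    have hbasis : ∀ z : M.Rclass x, ⟪M.dvec ⟨M.e x, hexR⟩, (Tx i) (M.dvec z)⟫ = 0 := by
      intro z
      by_cases hz : (z : ℝ) ∈ M.F i '' M.Ipart i
      · obtain ⟨w, hw, hFw⟩ := hz
        have hwR : w ∈ M.Rclass x := hback i hi z z.2 w hw hFw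
        rw [(hTx i hi).1 z ⟨w, hwR⟩ hw hFw]
        have hnee : (⟨M.e x, hexR⟩ : M.Rclass x) ≠ (⟨w, hwR⟩ : M.Rclass x) := by
          intro h
          apply hexdom
          have hval : M.e x = w := congrArg Subtype.val h
          rw [hval]
          exact M.memDom hi hw
        unfold MarkovSystem.dvec
        rw [lp.inner_single_left, lp.single_apply_ne 2 _ _ hnee]
        simp
      · rw [(hTx i hi).2 z hz]
        simp
    intro ψ
    have hsum : HasSum (fun z : M.Rclass x => lp.single 2 z (ψ z)) ψ :=
      lp.hasSum_single ENNReal.ofNat_ne_top ψ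
    have hφsum := ((innerSL ℂ (M.dvec ⟨M.e x, hexR⟩)).comp (Tx i)).hasSum hsum
    have hzero : ∀ z : M.Rclass x,
        ((innerSL ℂ (M.dvec ⟨M.e x, hexR⟩)).comp (Tx i)) (lp.single 2 z (ψ z)) = 0 := by
      intro z
      have h1 : lp.single 2 z (ψ z) = (ψ z) • M.dvec z := by
        unfold MarkovSystem.dvec
        rw [← lp.single_smul]
        simp [smul_eq_mul]
      rw [h1, map_smul]
      have h2 : ((innerSL ℂ (M.dvec ⟨M.e x, hexR⟩)).comp (Tx i)) (M.dvec z)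
          = ⟪M.dvec ⟨M.e x, hexR⟩, (Tx i) (M.dvec z)⟫ := rfl
      rw [h2, hbasis z, smul_zero]
    simp only [hzero] at hφsum
    have hfin := hφsum.unique hasSum_zero
    exact hfin
  have hyfwd : ∀ w : M.Rclass y, ∃ i, i < n ∧ ∃ z : M.Rclass y,
      (Ty i) (M.dvec z) = M.dvec w := by
    intro w
    obtain ⟨p, q, hp, hq, heq⟩ := w.2.2
    have hwdom : (w : ℝ) ∈ M.dom := by
      rcases Nat.eq_zero_or_pos q with rfl | hq0
      · rw [Function.iterate_zero_apply] at heq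
        exact heq ▸ hy.1.2 p
      · simpa using hq 0 hq0
    obtain ⟨j, hj, hwj, hfw⟩ := hM.compat₂ w hwdom
    have hfwR : M.f w ∈ M.Rclass y := by
      refine ⟨M.fMemItv hM hwdom, p+1, q, fun l _ => hy.1.2 l, ?_, ?_⟩
      · intro l hl
        have h5 : M.f^[l] (M.f (w:ℝ)) = M.f^[l+1] (w:ℝ) :=
          (Function.iterate_succ_apply M.f l (w:ℝ)).symm
        rw [h5]
        rcases Nat.lt_or_ge (l+1) q with h | h
        · exact hq (l+1) h
        · have h6 : l + 1 = q := by omega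
          rw [h6, ← heq]
          exact hy.1.2 p
      · rw [Function.iterate_succ_apply', heq]
        exact (Function.iterate_succ_apply' M.f q (w:ℝ)).symm.trans
          (Function.iterate_succ_apply M.f q (w:ℝ))
    exact ⟨j, hj, ⟨M.f w, hfwR⟩, (hTy j hj).1 ⟨M.f (w:ℝ), hfwR⟩ w hwj hfw.symm⟩
  have hcoord : ∀ w : M.Rclass y, ⟪M.dvec w, U (M.dvec ⟨M.e x, hexR⟩)⟫ = 0 := by
    intro w
    obtain ⟨i, hi, z, hz⟩ := hyfwd w
    have h7 : M.dvec w = U ((Tx i) (U.symm (M.dvec z))) := by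
      rw [hU i hi (U.symm (M.dvec z)), LinearIsometryEquiv.apply_symm_apply, hz]
    rw [h7, LinearIsometryEquiv.inner_map_map, ← inner_conj_symm,
      hxorth i hi (U.symm (M.dvec z))]
    simp
  have hζ : U (M.dvec ⟨M.e x, hexR⟩) = 0 := by
    set ζ := U (M.dvec ⟨M.e x, hexR⟩) with hζdef
    have hsum : HasSum (fun w : M.Rclass y => lp.single 2 w (ζ w)) ζ :=
      lp.hasSum_single ENNReal.ofNat_ne_top ζ
    have h8 := (innerSL ℂ ζ).hasSum hsum
    have h9 : ∀ w : M.Rclass y, (innerSL ℂ ζ) (lp.single 2 w (ζ w)) = 0 := by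
      intro w
      have h1 : lp.single 2 w (ζ w) = (ζ w) • M.dvec w := by
        unfold MarkovSystem.dvec
        rw [← lp.single_smul]
        simp [smul_eq_mul]
      rw [h1, map_smul]
      have h2 : (innerSL ℂ ζ) (M.dvec w) = ⟪ζ, M.dvec w⟫ := rfl
      rw [h2, ← inner_conj_symm, hcoord w]
      simp
    simp only [h9] at h8
    have h10 : ⟪ζ, ζ⟫ = (0:ℂ) := h8.unique hasSum_zero
    exact inner_self_eq_zero.mp h10
  have h11 : M.dvec (⟨M.e x, hexR⟩ : M.Rclass x) = 0 := U.map_eq_zero_iff.mp hζ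
  have h12 : (M.dvec (⟨M.e x, hexR⟩ : M.Rclass x)) ⟨M.e x, hexR⟩ = (1:ℂ) := by
    unfold MarkovSystem.dvec
    exact lp.single_apply_self 2 _ 1
  rw [h11] at h12
  simp at h12
end
end
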